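/- arXiv:2510.25968 — 2 statements merged into one kernel-verified Lean document; each statement's English description precedes it below -/
import Mathlib

section
/- Let n ≥ 3 and let S_n = {s₁,…,s_{n+1}} be unit vectors in ℝⁿ with ⟨sᵢ,s_j⟩ = −1/n for all i ≠ j (vertices of a regular simplex inscribed in S^{n−1}). If arccos(1/n) ≤ θ ≤ π/2, then the closed spherical caps C[sᵢ,θ], 1 ≤ i ≤ n+1, cover the whole sphere: ⋃_{i=1}^{n+1} C[sᵢ,θ] = S^{n−1}. -/
open MeasureTheory Metric Set Real

/-- The uniform (rotation-invariant) probability measure `σ` on the unit sphere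
`S^{n-1} ⊆ ℝⁿ`, obtained by normalizing the surface measure. -/
noncomputable def sphereSigma (n : ℕ) :
    Measure (sphere (0 : EuclideanSpace ℝ (Fin n)) 1) :=
  (((volume : Measure (EuclideanSpace ℝ (Fin n))).toSphere) Set.univ)⁻¹ •
    ((volume : Measure (EuclideanSpace ℝ (Fin n))).toSphere)

/-- The closed spherical cap `C[x,φ] = {y ∈ S^{n-1} : ⟨x,y⟩ ≥ cos φ}`. -/
noncomputable def closedCap (n : ℕ) (x : EuclideanSpace ℝ (Fin n)) (φ : ℝ) :
    Set (sphere (0 : EuclideanSpace ℝ (Fin n)) 1) :=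
  {y | Real.cos φ ≤ (inner ℝ x (y : EuclideanSpace ℝ (Fin n)) : ℝ)}

/-! For a unit vector `y`, the inner products `aᵢ = ⟨sᵢ, y⟩` satisfy `aᵢ ≥ -1`, `∑ aᵢ = 0` (the
vertices sum to zero) and `∑ aᵢ² = (n + 1) / n` (the vertices form a tight frame). Summing
`(aᵢ - max a)(aᵢ + 1) ≤ 0` gives `max a ≥ 1 / n ≥ cos θ`, so `y` lies in the cap of the vertex
realising the maximum. -/

open scoped InnerProductSpace

theorem exists_sum_sq_div_card_le_of_sum_eq_zero {ι : Type*} [Fintype ι] [Nonempty ι]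
    {a : ι → ℝ} (ha : ∀ i, -1 ≤ a i) (hsum : ∑ i, a i = 0) :
    ∃ i, (∑ i, a i ^ 2) / Fintype.card ι ≤ a i := by
  obtain ⟨j, hj⟩ := Finite.exists_max a
  refine ⟨j, (div_le_iff₀ (by exact_mod_cast Fintype.card_pos)).mpr ?_⟩
  calc ∑ i, a i ^ 2 ≤ ∑ i, ((a j - 1) * a i + a j) :=
        Finset.sum_le_sum fun i _ ↦ by nlinarith [ha i, hj i]
    _ = a j * Fintype.card ι := by
        rw [Finset.sum_add_distrib, ← Finset.mul_sum, hsum, Finset.sum_const, Finset.card_univ,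
          nsmul_eq_mul]
        ring

theorem cos_le_of_arccos_le {x θ : ℝ} (hx₁ : -1 ≤ x) (hx₂ : x ≤ 1) (h : arccos x ≤ θ)
    (hθ : θ ≤ π) : cos θ ≤ x :=
  cos_arccos hx₁ hx₂ ▸ cos_le_cos_of_nonneg_of_le_pi (arccos_nonneg x) hθ h

section Equiangular

variable {E : Type*} [NormedAddCommGroup E] [InnerProductSpace ℝ E]
  {ι : Type*} [Fintype ι] {t : ι → E} {c : ℝ}

theorem inner_sum_smul_left_of_equiangular (ht : ∀ i, ‖t i‖ = 1)
    (hc : Pairwise fun i j ↦ ⟪t i, t j⟫_ℝ = c) (g : ι → ℝ) (j : ι) :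
    ⟪∑ i, g i • t i, t j⟫_ℝ = (1 - c) * g j + c * ∑ i, g i := by
  classical
  have hterm : ∀ i, g i * ⟪t i, t j⟫_ℝ = c * g i + if i = j then (1 - c) * g j else 0 := by
    intro i
    by_cases hij : i = j
    · subst hij
      rw [real_inner_self_eq_norm_sq, ht, if_pos rfl]
      ring
    · rw [hc hij, if_neg hij]
      ring
  simp only [sum_inner, real_inner_smul_left, hterm, Finset.sum_add_distrib,
    Finset.sum_ite_eq', Finset.mem_univ, if_true, ← Finset.mul_sum]
  ring

/-- The Gram matrix `(1 - c) I + c J` has eigenvalues `1 - c` and `1 - c + (card ι) c`. -/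
theorem linearIndependent_of_equiangular (ht : ∀ i, ‖t i‖ = 1)
    (hc : Pairwise fun i j ↦ ⟪t i, t j⟫_ℝ = c) (hc₁ : c ≠ 1)
    (hN : 1 - c + Fintype.card ι * c ≠ 0) : LinearIndependent ℝ t := by
  rw [Fintype.linearIndependent_iff]
  intro g hg
  have hcoord : ∀ j, (1 - c) * g j + c * ∑ i, g i = 0 := fun j ↦ by
    rw [← inner_sum_smul_left_of_equiangular ht hc, hg, inner_zero_left]
  have hsum : ∑ i, g i = 0 := by
    have := Finset.sum_eq_zero (s := Finset.univ) fun j _ ↦ hcoord j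
    rw [Finset.sum_add_distrib, ← Finset.mul_sum, Finset.sum_const, Finset.card_univ,
      nsmul_eq_mul] at this
    exact (mul_eq_zero.mp (by linear_combination this)).resolve_left hN
  intro j
  have := hcoord j
  rw [hsum, mul_zero, add_zero] at this
  exact (mul_eq_zero.mp this).resolve_left (sub_ne_zero.mpr hc₁.symm)

theorem sum_eq_zero_of_equiangular (ht : ∀ i, ‖t i‖ = 1)
    (hc : Pairwise fun i j ↦ ⟪t i, t j⟫_ℝ = c) (hN : 1 - c + Fintype.card ι * c = 0) :
    ∑ i, t i = 0 := by
  have hinner : ∀ j, ⟪∑ i, t i, t j⟫_ℝ = 0 := fun j ↦ by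
    have := inner_sum_smul_left_of_equiangular ht hc (fun _ ↦ 1) j
    simp only [one_smul, Finset.sum_const, Finset.card_univ, nsmul_eq_mul, mul_one] at this
    rw [this, ← hN]
    ring
  rw [← inner_self_eq_zero (𝕜 := ℝ), inner_sum]
  exact Finset.sum_eq_zero fun j _ ↦ hinner j

theorem sum_inner_sq_of_mem_span (ht : ∀ i, ‖t i‖ = 1)
    (hc : Pairwise fun i j ↦ ⟪t i, t j⟫_ℝ = c) (hN : 1 - c + Fintype.card ι * c = 0)
    {y : E} (hy : y ∈ Submodule.span ℝ (range t)) :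
    ∑ i, ⟪t i, y⟫_ℝ ^ 2 = (1 - c) * ‖y‖ ^ 2 := by
  obtain ⟨g, rfl⟩ := (Submodule.mem_span_range_iff_exists_fun ℝ).mp hy
  set y := ∑ i, g i • t i
  have hcoord : ∀ j, ⟪t j, y⟫_ℝ = (1 - c) * g j + c * ∑ i, g i := fun j ↦ by
    rw [real_inner_comm, inner_sum_smul_left_of_equiangular ht hc]
  have hsum : ∑ i, ⟪t i, y⟫_ℝ = 0 := by
    rw [← sum_inner, sum_eq_zero_of_equiangular ht hc hN, inner_zero_left]
  have hnorm : ∑ i, g i * ⟪t i, y⟫_ℝ = ‖y‖ ^ 2 := by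
    rw [← real_inner_self_eq_norm_sq, sum_inner]
    simp only [real_inner_smul_left, y]
  calc ∑ i, ⟪t i, y⟫_ℝ ^ 2 = ∑ i, ⟪t i, y⟫_ℝ * ((1 - c) * g i + c * ∑ i, g i) :=
        Finset.sum_congr rfl fun i _ ↦ by rw [sq, ← hcoord]
    _ = (1 - c) * ∑ i, g i * ⟪t i, y⟫_ℝ + (c * ∑ i, g i) * ∑ i, ⟪t i, y⟫_ℝ := by
        rw [Finset.mul_sum _ (fun i ↦ g i * ⟪t i, y⟫_ℝ), Finset.mul_sum _ (fun i ↦ ⟪t i, y⟫_ℝ),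
          ← Finset.sum_add_distrib]
        exact Finset.sum_congr rfl fun i _ ↦ by ring
    _ = (1 - c) * ‖y‖ ^ 2 := by rw [hnorm, hsum, mul_zero, add_zero]

end Equiangular

section RegularSimplex

variable {E : Type*} [NormedAddCommGroup E] [InnerProductSpace ℝ E]
  {m : ℕ} {t : Fin (m + 1) → E}

/-- `m` of the `m + 1` vertices are already linearly independent. -/
theorem span_range_eq_top_of_regularSimplex (hm : m ≠ 0) (hE : Module.finrank ℝ E = m)
    (ht : ∀ i, ‖t i‖ = 1) (hc : Pairwise fun i j ↦ ⟪t i, t j⟫_ℝ = -1 / m) :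
    Submodule.span ℝ (range t) = ⊤ := by
  have : NeZero m := ⟨hm⟩
  have hm' : (m : ℝ) ≠ 0 := Nat.cast_ne_zero.mpr hm
  have hli : LinearIndependent ℝ (t ∘ Fin.castSucc) := by
    refine linearIndependent_of_equiangular (fun i ↦ ht _)
      (hc.comp_of_injective (Fin.castSucc_injective m)) ?_ ?_
    · have : -1 / (m : ℝ) ≤ 0 := div_nonpos_of_nonpos_of_nonneg (by norm_num) m.cast_nonneg
      linarith
    · rw [Fintype.card_fin]
      field_simp
      simp [hm']
  exact top_le_iff.mp <| (hli.span_eq_top_of_card_eq_finrank (by simp [hE])).symm.le.trans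
    (Submodule.span_mono (range_comp_subset_range _ _))

theorem exists_inner_ge_of_regularSimplex (hm : m ≠ 0) (hE : Module.finrank ℝ E = m)
    (ht : ∀ i, ‖t i‖ = 1) (hc : Pairwise fun i j ↦ ⟪t i, t j⟫_ℝ = -1 / m)
    {y : E} (hy : ‖y‖ = 1) : ∃ i, 1 / (m : ℝ) ≤ ⟪t i, y⟫_ℝ := by
  have hm' : (m : ℝ) ≠ 0 := Nat.cast_ne_zero.mpr hm
  have hN : 1 - (-1 / m) + Fintype.card (Fin (m + 1)) * (-1 / (m : ℝ)) = 0 := by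
    rw [Fintype.card_fin]
    push_cast
    field_simp
    ring
  have hsq := sum_inner_sq_of_mem_span ht hc hN (y := y)
    (by rw [span_range_eq_top_of_regularSimplex hm hE ht hc]; trivial)
  have hsum : ∑ i, ⟪t i, y⟫_ℝ = 0 := by
    rw [← sum_inner, sum_eq_zero_of_equiangular ht hc hN, inner_zero_left]
  obtain ⟨i, hi⟩ := exists_sum_sq_div_card_le_of_sum_eq_zero
    (fun i ↦ neg_one_le_real_inner_of_norm_eq_one (ht i) hy) hsum
  refine ⟨i, le_of_eq_of_le ?_ hi⟩
  rw [hsq, hy, Fintype.card_fin]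
  push_cast
  field_simp
  ring

end RegularSimplex

/-- Caps of radius `arccos(1/n) ≤ θ ≤ π/2` centered at the `n+1` vertices of a regular
simplex inscribed in `S^{n-1}` cover the whole sphere. -/
theorem simplex_caps_cover (n : ℕ) (hn : 3 ≤ n)
    (s : Fin (n + 1) → EuclideanSpace ℝ (Fin n)) (hs : ∀ i, ‖s i‖ = 1)
    (hangle : ∀ i j, i ≠ j → (inner ℝ (s i) (s j) : ℝ) = -1 / n)
    (θ : ℝ) (hθ0 : Real.arccos (1 / n) ≤ θ) (hθ : θ ≤ π / 2) :
    (⋃ i, closedCap n (s i) θ) = Set.univ := by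
  have hn₀ : n ≠ 0 := by omega
  have hinv_le_one : 1 / (n : ℝ) ≤ 1 :=
    (div_le_one (by positivity)).mpr (by exact_mod_cast Nat.one_le_iff_ne_zero.mpr hn₀)
  have hcos : cos θ ≤ 1 / n :=
    cos_le_of_arccos_le (by linarith [show 0 ≤ 1 / (n : ℝ) by positivity]) hinv_le_one hθ0
      (by linarith [pi_pos])
  refine eq_univ_of_forall fun ⟨y, hy⟩ ↦ mem_iUnion.mpr ?_
  obtain ⟨i, hi⟩ := exists_inner_ge_of_regularSimplex hn₀ finrank_euclideanSpace_fin hs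
    (fun i j ↦ hangle i j) (mem_sphere_zero_iff_norm.mp hy)
  exact ⟨i, hcos.trans hi⟩
end

section
/- Let K = ⋃_{i=1}^m conv({xᵢ} ∪ Bⁿ) be a cap body in ℝⁿ with vertices x₁,…,x_m, unit directions x̂ᵢ = xᵢ/‖xᵢ‖ and base-cap radii φᵢ = arccos(1/‖xᵢ‖). Suppose unit vectors v₁,…,v_k satisfy: (i) for each 1 ≤ i ≤ m, some v_j lies in the open cap C(−x̂ᵢ, π/2 − φᵢ); and (ii) the positive hull of {v₁,…,v_k} is all of ℝⁿ, i.e. every x ∈ ℝⁿ can be written as c₁v₁ + … + c_k v_k with all c_j > 0. Then the directions v₁,…,v_k illuminate K. -/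
/-!
The open unit ball lies in the interior of `K`, so it suffices to push every boundary point `p`
into it. If `p` lies on the unit sphere, writing `-p` as a positive combination of the `vⱼ` gives
some `vⱼ` with `⟪p, vⱼ⟫ < 0`, and `p - ⟪p, vⱼ⟫ vⱼ` lies in the open ball. Otherwise `p` lies on a
segment `[xᵢ, b]` with `b ∈ Bⁿ` and a positive weight `σ` on `xᵢ`. Condition (i) says precisely
that `⟪xᵢ, vⱼ⟫ < 0` and that the line `xᵢ + ℝ vⱼ` passes at distance `< 1` from the origin, so
`xᵢ + t vⱼ` lies in the open ball for `t = -⟪xᵢ, vⱼ⟫`; by convexity of the ball, so does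
`p + σ t vⱼ = σ (xᵢ + t vⱼ) + (1 - σ) b`.
-/

open Metric Set Real
open scoped RealInnerProductSpace

/-- The directions `v 0, …, v (k-1)` illuminate `K`: every boundary point of `K`
is moved into the interior of `K` by a positive multiple of some `v j`. -/
def Illuminates {n k : ℕ} (v : Fin k → EuclideanSpace ℝ (Fin n))
    (K : Set (EuclideanSpace ℝ (Fin n))) : Prop :=
  ∀ x ∈ frontier K, ∃ j : Fin k, ∃ t : ℝ, 0 < t ∧ x + t • v j ∈ interior K

theorem IsCompact.convexJoin {E : Type*} [AddCommGroup E] [Module ℝ E] [TopologicalSpace E]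
    [ContinuousAdd E] [ContinuousSMul ℝ E] {s t : Set E} (hs : IsCompact s)
    (ht : IsCompact t) : IsCompact (_root_.convexJoin ℝ s t) := by
  have himage : _root_.convexJoin ℝ s t =
      (fun q : (E × E) × ℝ => (1 - q.2) • q.1.1 + q.2 • q.1.2) '' ((s ×ˢ t) ×ˢ Icc 0 1) := by
    ext z
    simp only [mem_convexJoin, segment_eq_image, mem_image, mem_prod, Prod.exists]
    constructor
    · rintro ⟨a, ha, b, hb, θ, hθ, rfl⟩
      exact ⟨a, b, θ, ⟨⟨ha, hb⟩, hθ⟩, rfl⟩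
    · rintro ⟨a, b, θ, ⟨⟨ha, hb⟩, hθ⟩, rfl⟩
      exact ⟨a, ha, b, hb, θ, hθ, rfl⟩
  rw [himage]
  exact ((hs.prod ht).prod isCompact_Icc).image (by fun_prop)

theorem cos_pi_div_two_sub_arccos_one_div {a : ℝ} (ha : 0 < a) :
    cos (π / 2 - arccos (1 / a)) = √(a ^ 2 - 1) / a := by
  rw [cos_pi_div_two_sub, sin_arccos,
    show 1 - (1 / a) ^ 2 = (a ^ 2 - 1) / a ^ 2 by field_simp, sqrt_div' _ (sq_nonneg a),
    sqrt_sq ha.le]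

section InnerProductSpace

variable {E : Type*} [NormedAddCommGroup E] [InnerProductSpace ℝ E]

theorem convexHull_singleton_union_closedBall (y : E) :
    convexHull ℝ ({y} ∪ closedBall (0 : E) 1) = convexJoin ℝ {y} (closedBall (0 : E) 1) := by
  rw [singleton_union, convexHull_insert ⟨0, mem_closedBall_self zero_le_one⟩,
    (convex_closedBall _ _).convexHull_eq]

theorem isCompact_convexHull_singleton_union_closedBall [ProperSpace E] (y : E) :
    IsCompact (convexHull ℝ ({y} ∪ closedBall (0 : E) 1)) := by
  rw [convexHull_singleton_union_closedBall]
  exact isCompact_singleton.convexJoin (isCompact_closedBall 0 1)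

theorem add_neg_inner_smul_mem_ball {y v : E} (hv : ‖v‖ = 1)
    (h : ‖y‖ ^ 2 - 1 < ⟪y, v⟫ ^ 2) : y + (-⟪y, v⟫) • v ∈ ball (0 : E) 1 := by
  have hsq : ‖y + (-⟪y, v⟫) • v‖ ^ 2 = ‖y‖ ^ 2 - ⟪y, v⟫ ^ 2 := by
    rw [norm_add_sq_real, inner_smul_right, norm_smul, hv, norm_neg, Real.norm_eq_abs,
      mul_one, sq_abs]
    ring
  rw [mem_ball_zero_iff]
  exact (sq_lt_one_iff₀ (norm_nonneg _)).1 (by linarith)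

theorem exists_inner_neg_of_neg_eq_sum_pos_smul {ι : Type*} [Fintype ι] {v : ι → E}
    {c : ι → ℝ} (hc : ∀ j, 0 < c j) {p : E} (hsum : -p = ∑ j, c j • v j) (hp : p ≠ 0) :
    ∃ j, ⟪p, v j⟫ < 0 := by
  have hlt : ∑ j, c j * ⟪p, v j⟫ < ∑ _j : ι, (0 : ℝ) := by
    calc ∑ j, c j * ⟪p, v j⟫ = ⟪p, -p⟫ := by
          simp only [hsum, inner_sum, inner_smul_right]
      _ = -‖p‖ ^ 2 := by rw [inner_neg_right, real_inner_self_eq_norm_sq]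
      _ < ∑ _j : ι, (0 : ℝ) := by simpa using pow_pos (norm_pos_iff.2 hp) 2
  obtain ⟨j, -, hj⟩ := Finset.exists_lt_of_sum_lt hlt
  exact ⟨j, neg_of_mul_neg_right hj (hc j).le⟩

theorem exists_add_smul_mem_ball_of_mem_convexJoin {y v p : E} {t : ℝ} (ht : 0 < t)
    (hy : y + t • v ∈ ball (0 : E) 1) (hp : p ∈ convexJoin ℝ {y} (closedBall (0 : E) 1)) :
    ‖p‖ ≤ 1 ∨ ∃ s : ℝ, 0 < s ∧ p + s • v ∈ ball (0 : E) 1 := by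
  obtain ⟨y', hy', b, hb, σ, τ, hσ, hτ, hστ, rfl⟩ := mem_convexJoin.1 hp
  rw [mem_singleton_iff] at hy'
  subst y'
  rcases hσ.eq_or_lt with rfl | hσ
  · left
    simpa [show τ = 1 by linarith] using hb
  · right
    refine ⟨σ * t, mul_pos hσ ht, ?_⟩
    have hcombo : σ • (y + t • v) + τ • b ∈ interior (ball (0 : E) 1) :=
      (convex_ball 0 1).combo_interior_closure_mem_interior
        (by rwa [isOpen_ball.interior_eq]) (by rwa [closure_ball 0 one_ne_zero]) hσ hτ hστ
    rw [isOpen_ball.interior_eq] at hcombo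
    convert hcombo using 1
    rw [smul_add, smul_smul]
    abel

theorem sq_sub_one_lt_inner_sq_of_cos_lt {y v : E} (hy : 0 < ‖y‖)
    (h : cos (π / 2 - arccos (1 / ‖y‖)) < ⟪-(‖y‖⁻¹ • y), v⟫) :
    ‖y‖ ^ 2 - 1 < ⟪y, v⟫ ^ 2 ∧ ⟪y, v⟫ < 0 := by
  rw [cos_pi_div_two_sub_arccos_one_div hy, inner_neg_left, real_inner_smul_left,
    ← mul_neg, inv_mul_eq_div, div_lt_div_iff_of_pos_right hy] at h
  have hpos : 0 < -⟪y, v⟫ := (sqrt_nonneg _).trans_lt h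
  rw [sqrt_lt' hpos, neg_sq] at h
  exact ⟨h, neg_pos.1 hpos⟩

end InnerProductSpace

theorem capBody_illuminates_of_caps_and_posHull_general (n m k : ℕ)
    (x : Fin m → EuclideanSpace ℝ (Fin n)) (hx : ∀ i, 1 < ‖x i‖)
    (K : Set (EuclideanSpace ℝ (Fin n)))
    (hK : K = ⋃ i, convexHull ℝ ({x i} ∪ closedBall (0 : EuclideanSpace ℝ (Fin n)) 1))
    (v : Fin k → EuclideanSpace ℝ (Fin n)) (hv : ∀ j, ‖v j‖ = 1)
    (h1 : ∀ i : Fin m, ∃ j : Fin k,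
      Real.cos (π / 2 - Real.arccos (1 / ‖x i‖)) <
        (inner ℝ (-(‖x i‖⁻¹ • x i)) (v j) : ℝ))
    (h2 : ∀ z : EuclideanSpace ℝ (Fin n), ∃ c : Fin k → ℝ,
      (∀ j, 0 < c j) ∧ z = ∑ j, c j • v j) :
    Illuminates v K := by
  intro p hp
  have hKclosed : IsClosed K := hK ▸
    (isCompact_iUnion fun i => isCompact_convexHull_singleton_union_closedBall (x i)).isClosed
  obtain ⟨i, hi⟩ := mem_iUnion.1 (hK ▸ hKclosed.frontier_subset hp)
  have hball : ball 0 1 ⊆ interior K := interior_maximal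
    (ball_subset_closedBall.trans <| subset_union_right.trans <|
      (subset_convexHull ℝ _).trans (hK ▸ subset_iUnion _ i)) isOpen_ball
  obtain ⟨j, hj⟩ := h1 i
  obtain ⟨hxv, hxv_neg⟩ := sq_sub_one_lt_inner_sq_of_cos_lt (zero_lt_one.trans (hx i)) hj
  rw [convexHull_singleton_union_closedBall] at hi
  rcases exists_add_smul_mem_ball_of_mem_convexJoin (neg_pos.2 hxv_neg)
    (add_neg_inner_smul_mem_ball (hv j) hxv) hi with hp_le | ⟨s, hs, hps⟩
  · have hp_eq : ‖p‖ = 1 :=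
      hp_le.antisymm (not_lt.1 fun hlt => hp.2 (hball (mem_ball_zero_iff.2 hlt)))
    obtain ⟨c, hc, hsum⟩ := h2 (-p)
    obtain ⟨j', hj'⟩ := exists_inner_neg_of_neg_eq_sum_pos_smul hc hsum
      (norm_ne_zero_iff.1 (hp_eq ▸ one_ne_zero))
    refine ⟨j', _, neg_pos.2 hj', hball (add_neg_inner_smul_mem_ball (hv j') ?_)⟩
    rw [hp_eq]
    nlinarith
  · exact ⟨j, s, hs, hball hps⟩

/-- Sufficient condition for illumination of a cap body `K = ⋃ᵢ conv({xᵢ} ∪ Bⁿ)` by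
unit directions `v₁, …, v_k`: (i) for each vertex `xᵢ` some `v_j` lies in the open cap
`C(−x̂ᵢ, π/2 − φᵢ)` (with `x̂ᵢ = xᵢ/‖xᵢ‖`, `φᵢ = arccos(1/‖xᵢ‖)`), and (ii) the
positive hull of `{v₁,…,v_k}` is all of `ℝⁿ`. -/
theorem capBody_illuminates_of_caps_and_posHull (n m k : ℕ)
    (x : Fin m → EuclideanSpace ℝ (Fin n)) (hx : ∀ i, 1 < ‖x i‖)
    (K : Set (EuclideanSpace ℝ (Fin n)))
    (hK : K = ⋃ i, convexHull ℝ ({x i} ∪ closedBall (0 : EuclideanSpace ℝ (Fin n)) 1))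
    (hconv : Convex ℝ K)
    (v : Fin k → EuclideanSpace ℝ (Fin n)) (hv : ∀ j, ‖v j‖ = 1)
    (h1 : ∀ i : Fin m, ∃ j : Fin k,
      Real.cos (π / 2 - Real.arccos (1 / ‖x i‖)) <
        (inner ℝ (-(‖x i‖⁻¹ • x i)) (v j) : ℝ))
    (h2 : ∀ z : EuclideanSpace ℝ (Fin n), ∃ c : Fin k → ℝ,
      (∀ j, 0 < c j) ∧ z = ∑ j, c j • v j) :
    Illuminates v K :=
  capBody_illuminates_of_caps_and_posHull_general n m k x hx K hK v hv h1 h2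
end
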